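/- arXiv:2012.10800 — 2 statements merged into one kernel-verified Lean document; each statement's English description precedes it below -/
import Mathlib

section
/- For a PDG score ⟦M⟧_γ(μ) = Inc(μ) + γ·IDef(μ), where IDef(μ) = Σ_{L=(X,Y)} H_μ(Y|X) − H(μ), if 0 < γ ≤ min_L β_L then ⟦M⟧_γ is a strictly convex function of μ on the probability simplex, and hence has a unique minimizer. -/
/-!
Expanding the definitions, the score is a linear function of `μ`, plus
`Σ_L (β_L - γ) · (-H_μ(Y_L | X_L))`, minus `γ · H(μ)`. The conditional entropy is concave:
`-H_μ(Y | X) = Σ_{x,y} μ(x,y) log (μ(x,y) / μ(x))` is a sum of the perspective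
`(u, v) ↦ u log (u / v)` of the convex function `t log t`, composed with linear maps of `μ`.
The joint entropy is strictly concave, so for `0 < γ ≤ β_L` the score is strictly convex.
Rewriting `H_μ(Y | X) = H_μ(X, Y) - H_μ(X)` shows it is continuous on the compact simplex,
so it has a minimizer there, unique by strict convexity.
-/

open scoped Classical BigOperators

noncomputable section

/-- `μ` is a probability distribution on the finite set `W`. -/
def IsDist {W : Type*} [Fintype W] (μ : W → ℝ) : Prop :=
  (∀ w, 0 ≤ μ w) ∧ ∑ w, μ w = 1

/-- Shannon entropy `H(μ)`. -/
def entropy {W : Type*} [Fintype W] (μ : W → ℝ) : ℝ :=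
  ∑ w, Real.negMulLog (μ w)

/-- Relative entropy `D(μ‖ν)`, summing over the support of `μ`. -/
def klR {W : Type*} [Fintype W] (μ ν : W → ℝ) : ℝ :=
  ∑ w, if 0 < μ w then μ w * Real.log (μ w / ν w) else 0

/-- Marginal probability of the event `f = a` under `μ`. -/
def pm {W A : Type*} [Fintype W] (μ : W → ℝ) (f : W → A) (a : A) : ℝ :=
  ∑ w, if f w = a then μ w else 0

/-- Joint probability of `f = a` and `g = b` under `μ`. -/
def pm2 {W A B : Type*} [Fintype W] (μ : W → ℝ) (f : W → A) (g : W → B)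
    (a : A) (b : B) : ℝ :=
  ∑ w, if f w = a ∧ g w = b then μ w else 0

/-- Conditional distribution of `g` given `f = a` under `μ`. -/
def condDist {W A B : Type*} [Fintype W] (μ : W → ℝ) (f : W → A) (g : W → B)
    (a : A) : B → ℝ :=
  fun b => pm2 μ f g a b / pm μ f a

/-- Conditional entropy `H(g | f)` under `μ`. -/
def condEnt {W A B : Type*} [Fintype W] [Fintype A] [Fintype B]
    (μ : W → ℝ) (f : W → A) (g : W → B) : ℝ :=
  ∑ a, ∑ b, if 0 < pm2 μ f g a b then
    -(pm2 μ f g a b * Real.log (pm2 μ f g a b / pm μ f a)) else 0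

/-- The incompatibility `Inc(μ) = Σ_L β_L E_{x∼μ_X}[D(μ(Y|X=x) ‖ p_L(x))]`. -/
def Inc {W ι : Type*} [Fintype W] [Fintype ι] {A B : ι → Type*}
    [∀ L, Fintype (A L)] [∀ L, Fintype (B L)]
    (X : (L : ι) → W → A L) (Y : (L : ι) → W → B L)
    (p : (L : ι) → A L → B L → ℝ) (β : ι → ℝ) (μ : W → ℝ) : ℝ :=
  ∑ L, β L * ∑ a, pm μ (X L) a * klR (condDist μ (X L) (Y L) a) (p L a)

/-- Information deficiency `IDef(μ) = Σ_L H_μ(Y|X) - H(μ)`. -/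
def IDef {W ι : Type*} [Fintype W] [Fintype ι] {A B : ι → Type*}
    [∀ L, Fintype (A L)] [∀ L, Fintype (B L)]
    (X : (L : ι) → W → A L) (Y : (L : ι) → W → B L) (μ : W → ℝ) : ℝ :=
  (∑ L, condEnt μ (X L) (Y L)) - entropy μ

open Real Finset

section Convexity

variable {𝕜 E β : Type*} [Semiring 𝕜] [PartialOrder 𝕜] [AddCommMonoid E] [SMul 𝕜 E]
  [AddCommMonoid β] [PartialOrder β] [IsOrderedAddMonoid β] [Module 𝕜 β]

theorem convexOn_finset_sum {ι : Type*} {s : Set E} {t : Finset ι} {f : ι → E → β}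
    (hs : Convex 𝕜 s) (hf : ∀ i ∈ t, ConvexOn 𝕜 s (f i)) :
    ConvexOn 𝕜 s fun x => ∑ i ∈ t, f i x := by
  classical
  induction t using Finset.induction_on with
  | empty => simpa using convexOn_const (0 : β) hs
  | insert i t hi ih =>
    simp_rw [sum_insert hi]
    exact (hf i (mem_insert_self i t)).add (ih fun j hj => hf j (mem_insert_of_mem hj))

end Convexity

theorem StrictConcaveOn.const_mul {E : Type*} [AddCommMonoid E] [Module ℝ E] {s : Set E}
    {f : E → ℝ} {c : ℝ} (hc : 0 < c) (hf : StrictConcaveOn ℝ s f) :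
    StrictConcaveOn ℝ s fun x => c * f x := by
  refine ⟨hf.1, fun x hx y hy hxy a b ha hb hab => ?_⟩
  have h := mul_lt_mul_of_pos_left (hf.2 hx hy hxy ha hb hab) hc
  simp only [smul_eq_mul] at h ⊢
  linarith

theorem StrictConcaveOn.sum_comp_apply {ι : Type*} [Fintype ι] {s : Set ℝ} {φ : ℝ → ℝ}
    (hφ : StrictConcaveOn ℝ s φ) :
    StrictConcaveOn ℝ (Set.univ.pi fun _ => s) fun x : ι → ℝ => ∑ i, φ (x i) := by
  refine ⟨convex_pi fun i _ => hφ.1, fun x hx y hy hxy a b ha hb hab => ?_⟩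
  obtain ⟨i₀, hi₀⟩ := Function.ne_iff.1 hxy
  simp only [smul_eq_mul, mul_sum, ← sum_add_distrib, Pi.add_apply, Pi.smul_apply]
  refine sum_lt_sum (fun i _ => ?_) ⟨i₀, mem_univ i₀, ?_⟩
  · exact hφ.concaveOn.2 (hx i trivial) (hy i trivial) ha.le hb.le hab
  · exact hφ.2 (hx i₀ trivial) (hy i₀ trivial) hi₀ ha hb hab

theorem mul_mul_log_div_mul {c : ℝ} (hc : 0 ≤ c) (x y : ℝ) :
    c * x * log (c * x / (c * y)) = c * (x * log (x / y)) := by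
  rcases hc.eq_or_lt with rfl | hc
  · simp
  · rw [mul_div_mul_left _ _ hc.ne', mul_assoc]

/-- The two-term log-sum inequality. -/
theorem add_mul_log_div_add_le {x₁ y₁ x₂ y₂ : ℝ} (hx₁ : 0 ≤ x₁) (hxy₁ : x₁ ≤ y₁)
    (hx₂ : 0 ≤ x₂) (hxy₂ : x₂ ≤ y₂) :
    (x₁ + x₂) * log ((x₁ + x₂) / (y₁ + y₂)) ≤ x₁ * log (x₁ / y₁) + x₂ * log (x₂ / y₂) := by
  rcases (hx₁.trans hxy₁).eq_or_lt with rfl | hy₁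
  · obtain rfl : x₁ = 0 := le_antisymm hxy₁ hx₁
    simp
  rcases (hx₂.trans hxy₂).eq_or_lt with rfl | hy₂
  · obtain rfl : x₂ = 0 := le_antisymm hxy₂ hx₂
    simp
  have hy : 0 < y₁ + y₂ := add_pos hy₁ hy₂
  have h := convexOn_mul_log.2 (Set.mem_Ici.2 (div_nonneg hx₁ hy₁.le))
    (Set.mem_Ici.2 (div_nonneg hx₂ hy₂.le)) (div_nonneg hy₁.le hy.le) (div_nonneg hy₂.le hy.le)
    (by rw [← add_div, div_self hy.ne'])
  have hcomb : y₁ / (y₁ + y₂) * (x₁ / y₁) + y₂ / (y₁ + y₂) * (x₂ / y₂) = (x₁ + x₂) / (y₁ + y₂) := by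
    field_simp
  simp only [smul_eq_mul, hcomb] at h
  calc (x₁ + x₂) * log ((x₁ + x₂) / (y₁ + y₂))
      = (y₁ + y₂) * ((x₁ + x₂) / (y₁ + y₂) * log ((x₁ + x₂) / (y₁ + y₂))) := by
        rw [← mul_assoc, mul_div_cancel₀ _ hy.ne']
    _ ≤ (y₁ + y₂) * (y₁ / (y₁ + y₂) * (x₁ / y₁ * log (x₁ / y₁))
          + y₂ / (y₁ + y₂) * (x₂ / y₂ * log (x₂ / y₂))) := mul_le_mul_of_nonneg_left h hy.le
    _ = x₁ * log (x₁ / y₁) + x₂ * log (x₂ / y₂) := by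
        field_simp

/-- The bound `x ≤ y` keeps the domain away from `y = 0 < x`, where the junk value
`log (x / 0) = 0` breaks convexity. -/
theorem convexOn_mul_log_div :
    ConvexOn ℝ {p : ℝ × ℝ | 0 ≤ p.1 ∧ p.1 ≤ p.2} fun p => p.1 * log (p.1 / p.2) := by
  refine ⟨fun u hu v hv a b ha hb _ => ?_, fun u hu v hv a b ha hb _ => ?_⟩
  · simp only [Set.mem_ofPred_eq, Prod.fst_add, Prod.snd_add, Prod.smul_fst, Prod.smul_snd,
      smul_eq_mul] at hu hv ⊢
    exact ⟨add_nonneg (mul_nonneg ha hu.1) (mul_nonneg hb hv.1),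
      add_le_add (mul_le_mul_of_nonneg_left hu.2 ha) (mul_le_mul_of_nonneg_left hv.2 hb)⟩
  · simp only [Prod.fst_add, Prod.snd_add, Prod.smul_fst, Prod.smul_snd, smul_eq_mul]
    rw [← mul_mul_log_div_mul ha, ← mul_mul_log_div_mul hb]
    exact add_mul_log_div_add_le (mul_nonneg ha hu.1) (mul_le_mul_of_nonneg_left hu.2 ha)
      (mul_nonneg hb hv.1) (mul_le_mul_of_nonneg_left hv.2 hb)

section Marginals

variable {W A B : Type*} [Fintype W]

def pmₗ (f : W → A) (a : A) : (W → ℝ) →ₗ[ℝ] ℝ where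
  toFun μ := pm μ f a
  map_add' μ ν := by simp only [pm, Pi.add_apply, ite_add_zero, sum_add_distrib]
  map_smul' c μ := by simp only [pm, Pi.smul_apply, smul_eq_mul, mul_sum, mul_ite, mul_zero,
    RingHom.id_apply]

theorem pmₗ_apply (f : W → A) (a : A) (μ : W → ℝ) : pmₗ f a μ = pm μ f a := rfl

@[fun_prop]
theorem continuous_pm (f : W → A) (a : A) : Continuous fun μ : W → ℝ => pm μ f a :=
  (pmₗ f a).continuous_of_finiteDimensional

theorem pm2_eq_pm (μ : W → ℝ) (f : W → A) (g : W → B) (a : A) (b : B) :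
    pm2 μ f g a b = pm μ (fun w => (f w, g w)) (a, b) := by
  simp only [pm2, pm, Prod.mk.injEq]

@[fun_prop]
theorem continuous_pm2 (f : W → A) (g : W → B) (a : A) (b : B) :
    Continuous fun μ : W → ℝ => pm2 μ f g a b := by
  simpa only [pm2_eq_pm] using continuous_pm _ (a, b)

theorem pm_nonneg {μ : W → ℝ} (hμ : 0 ≤ μ) (f : W → A) (a : A) : 0 ≤ pm μ f a :=
  sum_nonneg fun w _ => by split_ifs; exacts [hμ w, le_rfl]

theorem pm2_nonneg {μ : W → ℝ} (hμ : 0 ≤ μ) (f : W → A) (g : W → B) (a : A) (b : B) :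
    0 ≤ pm2 μ f g a b :=
  pm2_eq_pm μ f g a b ▸ pm_nonneg hμ _ _

theorem pm2_le_pm {μ : W → ℝ} (hμ : 0 ≤ μ) (f : W → A) (g : W → B) (a : A) (b : B) :
    pm2 μ f g a b ≤ pm μ f a :=
  sum_le_sum fun w _ => by split_ifs <;> first | exact le_rfl | exact hμ w | tauto

theorem sum_pm2 [Fintype B] (μ : W → ℝ) (f : W → A) (g : W → B) (a : A) :
    ∑ b, pm2 μ f g a b = pm μ f a := by
  simp only [pm2, pm]
  rw [sum_comm]
  refine sum_congr rfl fun w _ => ?_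
  by_cases h : f w = a <;> simp [h]

theorem sum_pm_mul [Fintype A] (μ : W → ℝ) (f : W → A) (F : A → ℝ) :
    ∑ a, pm μ f a * F a = ∑ w, μ w * F (f w) := by
  simp only [pm, sum_mul, ite_mul, zero_mul]
  rw [sum_comm]
  simp only [sum_ite_eq, mem_univ, if_true]

theorem sum_pm2_mul [Fintype A] [Fintype B] (μ : W → ℝ) (f : W → A) (g : W → B)
    (F : A → B → ℝ) : ∑ a, ∑ b, pm2 μ f g a b * F a b = ∑ w, μ w * F (f w) (g w) := by
  simp only [pm2_eq_pm]
  exact (Fintype.sum_prod_type' _).symm.trans (sum_pm_mul μ _ fun ab : A × B => F ab.1 ab.2)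

end Marginals

section ConditionalEntropy

variable {W A B : Type*} [Fintype W] [Fintype A] [Fintype B]

theorem condEnt_eq_neg_sum_mul_log_div {μ : W → ℝ} (hμ : 0 ≤ μ) (f : W → A) (g : W → B) :
    condEnt μ f g = -∑ a, ∑ b, pm2 μ f g a b * log (pm2 μ f g a b / pm μ f a) := by
  simp only [condEnt, ← sum_neg_distrib]
  refine sum_congr rfl fun a _ => sum_congr rfl fun b _ => ?_
  split_ifs with h
  · rfl
  · simp [le_antisymm (not_lt.1 h) (pm2_nonneg hμ f g a b)]

theorem concaveOn_condEnt (f : W → A) (g : W → B) :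
    ConcaveOn ℝ (Set.Ici 0) fun μ : W → ℝ => condEnt μ f g := by
  have hterm : ∀ a b, ConvexOn ℝ (Set.Ici 0)
      fun μ : W → ℝ => pm2 μ f g a b * log (pm2 μ f g a b / pm μ f a) := by
    intro a b
    have h := convexOn_mul_log_div.comp_linearMap
      ((pmₗ (fun w => (f w, g w)) (a, b)).prod (pmₗ f a))
    refine (h.subset (fun μ hμ => ?_) (convex_Ici 0)).congr fun μ _ => ?_
    · simp only [Set.mem_preimage, LinearMap.prod_apply, Function.prod_apply, pmₗ_apply,
        ← pm2_eq_pm]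
      exact ⟨pm2_nonneg hμ f g a b, pm2_le_pm hμ f g a b⟩
    · simp only [Function.comp_apply, LinearMap.prod_apply, Function.prod_apply, pmₗ_apply,
        pm2_eq_pm]
  exact (convexOn_finset_sum (t := univ) (convex_Ici 0) fun a _ =>
    convexOn_finset_sum (t := univ) (convex_Ici 0) fun b _ => hterm a b).neg.congr
    fun μ hμ => (condEnt_eq_neg_sum_mul_log_div hμ f g).symm

theorem condEnt_eq_sub {μ : W → ℝ} (hμ : 0 ≤ μ) (f : W → A) (g : W → B) :
    condEnt μ f g = ∑ a, ∑ b, negMulLog (pm2 μ f g a b) - ∑ a, negMulLog (pm μ f a) := by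
  have hterm : ∀ a b, -(pm2 μ f g a b * log (pm2 μ f g a b / pm μ f a))
      = negMulLog (pm2 μ f g a b) + pm2 μ f g a b * log (pm μ f a) := by
    intro a b
    rcases (pm2_nonneg hμ f g a b).eq_or_lt with h | h
    · simp [← h]
    · rw [log_div h.ne' (h.trans_le (pm2_le_pm hμ f g a b)).ne', negMulLog]
      ring
  rw [condEnt_eq_neg_sum_mul_log_div hμ, ← sum_neg_distrib]
  simp_rw [← sum_neg_distrib, hterm, sum_add_distrib, ← sum_mul, sum_pm2]
  rw [sub_eq_add_neg, ← sum_neg_distrib]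
  simp [negMulLog]

@[fun_prop]
theorem continuousOn_condEnt (f : W → A) (g : W → B) :
    ContinuousOn (fun μ : W → ℝ => condEnt μ f g) (Set.Ici 0) := by
  refine ContinuousOn.congr ?_ fun μ hμ => condEnt_eq_sub hμ f g
  fun_prop

end ConditionalEntropy

theorem strictConcaveOn_entropy {W : Type*} [Fintype W] :
    StrictConcaveOn ℝ (Set.Ici 0) (entropy : (W → ℝ) → ℝ) := by
  have h := strictConcaveOn_negMulLog.sum_comp_apply (ι := W)
  rwa [Set.pi_univ_Ici] at h

@[fun_prop]
theorem continuous_entropy {W : Type*} [Fintype W] : Continuous (entropy : (W → ℝ) → ℝ) := by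
  unfold entropy
  fun_prop

theorem pm_mul_klR_condDist {W A B : Type*} [Fintype W] [Fintype B] {μ : W → ℝ} (hμ : 0 ≤ μ)
    (f : W → A) (g : W → B) (a : A) {q : B → ℝ} (hq : ∀ b, q b ≠ 0) :
    pm μ f a * klR (condDist μ f g a) q
      = ∑ b, (pm2 μ f g a b * log (pm2 μ f g a b / pm μ f a) - pm2 μ f g a b * log (q b)) := by
  rcases (pm_nonneg hμ f a).eq_or_lt with hpm | hpm
  · have hpm2 : ∀ b, pm2 μ f g a b = 0 := fun b =>
      le_antisymm (hpm ▸ pm2_le_pm hμ f g a b) (pm2_nonneg hμ f g a b)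
    simp [← hpm, hpm2]
  rw [klR, mul_sum]
  refine sum_congr rfl fun b _ => ?_
  rcases (pm2_nonneg hμ f g a b).eq_or_lt with hpm2 | hpm2
  · simp [condDist, ← hpm2]
  have hcond : 0 < condDist μ f g a b := div_pos hpm2 hpm
  rw [if_pos hcond, log_div hcond.ne' (hq b)]
  simp only [condDist]
  rw [← mul_assoc, mul_div_cancel₀ _ hpm.ne', mul_sub]

theorem sum_pm_mul_klR_condDist {W A B : Type*} [Fintype W] [Fintype A] [Fintype B]
    {μ : W → ℝ} (hμ : 0 ≤ μ) (f : W → A) (g : W → B) {q : A → B → ℝ}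
    (hq : ∀ a b, q a b ≠ 0) :
    ∑ a, pm μ f a * klR (condDist μ f g a) (q a)
      = -condEnt μ f g - ∑ w, μ w * log (q (f w) (g w)) := by
  simp only [pm_mul_klR_condDist hμ f g _ (hq _), sum_sub_distrib,
    condEnt_eq_neg_sum_mul_log_div hμ, neg_neg, sum_pm2_mul μ f g fun a b => log (q a b)]

section Score

variable {W ι : Type*} [Fintype W] [Fintype ι] {A B : ι → Type*}
  [∀ L, Fintype (A L)] [∀ L, Fintype (B L)]
  (X : (L : ι) → W → A L) (Y : (L : ι) → W → B L) (p : (L : ι) → A L → B L → ℝ) (β : ι → ℝ)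
  (γ : ℝ)

def pdgScore (μ : W → ℝ) : ℝ :=
  Inc X Y p β μ + γ * IDef X Y μ

variable {X Y p β γ}

theorem pdgScore_eq (hp : ∀ L a b, p L a b ≠ 0) {μ : W → ℝ} (hμ : 0 ≤ μ) :
    pdgScore X Y p β γ μ
      = ∑ w, μ w * -∑ L, β L * log (p L (X L w) (Y L w))
        + ∑ L, (β L - γ) * -condEnt μ (X L) (Y L) - γ * entropy μ := by
  simp only [pdgScore, Inc, IDef, sum_pm_mul_klR_condDist hμ _ _ (hp _), mul_sub, mul_neg,
    sub_mul, sum_sub_distrib, sum_neg_distrib, mul_sum, mul_left_comm (μ _)]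
  rw [sum_comm (s := univ (α := W))]
  ring

theorem strictConvexOn_pdgScore (hp : ∀ L a b, p L a b ≠ 0) (hγ : 0 < γ)
    (hγβ : ∀ L, γ ≤ β L) : StrictConvexOn ℝ (Set.Ici 0) (pdgScore X Y p β γ) := by
  have hlin : ConvexOn ℝ (Set.Ici 0)
      fun μ : W → ℝ => ∑ w, μ w * -∑ L, β L * log (p L (X L w) (Y L w)) :=
    (Fintype.linearCombination ℝ _).convexOn (convex_Ici 0)
  have hcond : ConvexOn ℝ (Set.Ici 0)
      fun μ : W → ℝ => ∑ L, (β L - γ) * -condEnt μ (X L) (Y L) :=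
    convexOn_finset_sum (convex_Ici 0) fun L _ =>
      (concaveOn_condEnt (X L) (Y L)).neg.smul (sub_nonneg.2 (hγβ L))
  have hent : StrictConvexOn ℝ (Set.Ici 0) fun μ : W → ℝ => -(γ * entropy μ) :=
    (strictConcaveOn_entropy.const_mul hγ).neg
  refine ((hlin.add hcond).add_strictConvexOn hent).congr fun μ hμ => ?_
  simp only [Pi.add_apply, pdgScore_eq hp hμ, sub_eq_add_neg]

theorem continuousOn_pdgScore (hp : ∀ L a b, p L a b ≠ 0) :
    ContinuousOn (pdgScore X Y p β γ) (Set.Ici 0) := by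
  refine ContinuousOn.congr ?_ fun μ hμ => pdgScore_eq hp hμ
  fun_prop

end Score

theorem pdg_score_strictly_convex_and_unique_min_general {W ι : Type*} [Fintype W] [Nonempty W]
    [Fintype ι] {A B : ι → Type*} [∀ L, Fintype (A L)] [∀ L, Fintype (B L)]
    (X : (L : ι) → W → A L) (Y : (L : ι) → W → B L)
    (p : (L : ι) → A L → B L → ℝ) (β : ι → ℝ)
    (hpos : ∀ L a b, 0 < p L a b)
    (γ : ℝ) (hγ0 : 0 < γ) (hγβ : ∀ L, γ ≤ β L) :
    (∀ μ ν : W → ℝ, IsDist μ → IsDist ν → μ ≠ ν → ∀ l : ℝ, 0 < l → l < 1 →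
      Inc X Y p β (fun w => l * μ w + (1 - l) * ν w) +
          γ * IDef X Y (fun w => l * μ w + (1 - l) * ν w) <
        l * (Inc X Y p β μ + γ * IDef X Y μ) +
          (1 - l) * (Inc X Y p β ν + γ * IDef X Y ν)) ∧
    (∃! μ : W → ℝ, IsDist μ ∧ ∀ ν : W → ℝ, IsDist ν →
      Inc X Y p β μ + γ * IDef X Y μ ≤ Inc X Y p β ν + γ * IDef X Y ν) := by
  have hp : ∀ L a b, p L a b ≠ 0 := fun L a b => (hpos L a b).ne'
  have hsimplex : stdSimplex ℝ W ⊆ Set.Ici 0 := fun μ hμ => hμ.1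
  have hconv : StrictConvexOn ℝ (stdSimplex ℝ W) (pdgScore X Y p β γ) :=
    (strictConvexOn_pdgScore hp hγ0 hγβ).subset hsimplex (convex_stdSimplex ℝ W)
  refine ⟨fun μ ν hμ hν hne l hl hl1 =>
    hconv.2 hμ hν hne hl (sub_pos.2 hl1) (add_sub_cancel l 1), ?_⟩
  obtain ⟨μ₀, hμ₀, hmin⟩ := (isCompact_stdSimplex ℝ W).exists_isMinOn
    (Set.nonempty_coe_sort.1 inferInstance) ((continuousOn_pdgScore hp).mono hsimplex)
  refine ⟨μ₀, ⟨hμ₀, fun ν hν => hmin hν⟩, fun μ ⟨hμ, hμmin⟩ => ?_⟩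
  exact hconv.eq_of_isMinOn (fun ν hν => hμmin ν hν) hmin hμ hμ₀

/-- If `0 < γ ≤ min_L β_L`, the PDG score `⟦M⟧_γ = Inc + γ·IDef` is strictly convex
on the probability simplex, and hence has a unique minimizer there. -/
theorem pdg_score_strictly_convex_and_unique_min {W ι : Type*} [Fintype W] [Nonempty W]
    [Fintype ι] {A B : ι → Type*} [∀ L, Fintype (A L)] [∀ L, Fintype (B L)]
    (X : (L : ι) → W → A L) (Y : (L : ι) → W → B L)
    (p : (L : ι) → A L → B L → ℝ) (β : ι → ℝ)
    (hβ : ∀ L, 0 < β L) (hp : ∀ L a, IsDist (p L a))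
    (hpos : ∀ L a b, 0 < p L a b)
    (γ : ℝ) (hγ0 : 0 < γ) (hγβ : ∀ L, γ ≤ β L) :
    (∀ μ ν : W → ℝ, IsDist μ → IsDist ν → μ ≠ ν → ∀ l : ℝ, 0 < l → l < 1 →
      Inc X Y p β (fun w => l * μ w + (1 - l) * ν w) +
          γ * IDef X Y (fun w => l * μ w + (1 - l) * ν w) <
        l * (Inc X Y p β μ + γ * IDef X Y μ) +
          (1 - l) * (Inc X Y p β ν + γ * IDef X Y ν)) ∧
    (∃! μ : W → ℝ, IsDist μ ∧ ∀ ν : W → ℝ, IsDist ν →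
      Inc X Y p β μ + γ * IDef X Y μ ≤ Inc X Y p β ν + γ * IDef X Y ν) :=
  pdg_score_strictly_convex_and_unique_min_general X Y p β hpos γ hγ0 hγβ
end
end

section
/- Let f, g : S → ℝ be functions on a compact metric space S with f continuous, g continuous, f ≥ 0. For γ > 0 let A_γ = argmin (f + γg). Then the set of limits μ of sequences μ_i ∈ A_{γ_i} with γ_i → 0⁺ is nonempty, contained in argmin f, and moreover g is constant on this limit set (all limit points attain the same value of g, namely min of g over argmin f). -/
/-!
Each `μᵢ` minimizes `f + γᵢ g`, so `f μᵢ + γᵢ g μᵢ ≤ f y + γᵢ g y` for every `y`; letting the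
penalty weight `γᵢ → 0` shows that the limit `μ` minimizes `f`. If `ν` minimizes `f`, then also
`f ν ≤ f μᵢ`, and subtracting gives `γᵢ g μᵢ ≤ γᵢ g ν`, i.e. `g μᵢ ≤ g ν` since `γᵢ > 0`; this
survives the limit. Limit points exist because minimizers exist on a compact space and a sequence
of them has a convergent subsequence.
-/

open Filter Topology

section PenalizedMinimizers

variable {X : Type*} {f g : X → ℝ}

theorem le_of_minimizes_add_mul {γ : ℝ} {x ν : X} (hγ : 0 < γ)
    (hx : ∀ y, f x + γ * g x ≤ f y + γ * g y) (hν : ∀ y, f ν ≤ f y) : g x ≤ g ν := by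
  have hγg : γ * g x ≤ γ * g ν := by linarith [hx ν, hν x]
  exact le_of_mul_le_mul_left hγg hγ

theorem exists_minimizer_add_mul [TopologicalSpace X] [CompactSpace X] [Nonempty X]
    (hf : Continuous f) (hg : Continuous g) (γ : ℝ) :
    ∃ x, ∀ y, f x + γ * g x ≤ f y + γ * g y :=
  (hf.add (continuous_const.mul hg)).exists_forall_le (by simp [cocompact_eq_bot])

theorem exists_tendsto_minimizers_add_mul [TopologicalSpace X] [FirstCountableTopology X]
    [CompactSpace X] [Nonempty X] (hf : Continuous f) (hg : Continuous g) :
    ∃ (γs : ℕ → ℝ) (xs : ℕ → X) (x : X),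
      (∀ i, 0 < γs i ∧ ∀ y, f (xs i) + γs i * g (xs i) ≤ f y + γs i * g y) ∧
      Tendsto γs atTop (𝓝 0) ∧ Tendsto xs atTop (𝓝 x) := by
  choose xs hxs using fun i : ℕ => exists_minimizer_add_mul hf hg (1 / (i + 1))
  obtain ⟨x, φ, hφ, hx⟩ := CompactSpace.tendsto_subseq xs
  exact ⟨fun i => 1 / (φ i + 1), xs ∘ φ, x, fun i => ⟨by positivity, hxs (φ i)⟩,
    tendsto_one_div_add_atTop_nhds_zero_nat.comp hφ.tendsto_atTop, hx⟩

variable [TopologicalSpace X] {ι : Type*} {l : Filter ι} [l.NeBot] {γs : ι → ℝ} {xs : ι → X}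
  {x : X}

theorem minimizes_of_tendsto_minimizers_add_mul (hf : ContinuousAt f x) (hg : ContinuousAt g x)
    (hmin : ∀ i, ∀ y, f (xs i) + γs i * g (xs i) ≤ f y + γs i * g y)
    (hγ : Tendsto γs l (𝓝 0)) (hx : Tendsto xs l (𝓝 x)) (y : X) : f x ≤ f y := by
  have hlhs : Tendsto (fun i => f (xs i) + γs i * g (xs i)) l (𝓝 (f x + 0 * g x)) :=
    (hf.tendsto.comp hx).add (hγ.mul (hg.tendsto.comp hx))
  have hrhs : Tendsto (fun i => f y + γs i * g y) l (𝓝 (f y + 0 * g y)) :=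
    tendsto_const_nhds.add (hγ.mul_const _)
  simpa using le_of_tendsto_of_tendsto' hlhs hrhs fun i => hmin i y

theorem le_of_tendsto_minimizers_add_mul (hg : ContinuousAt g x)
    (hmin : ∀ i, 0 < γs i ∧ ∀ y, f (xs i) + γs i * g (xs i) ≤ f y + γs i * g y)
    (hx : Tendsto xs l (𝓝 x)) {ν : X} (hν : ∀ y, f ν ≤ f y) : g x ≤ g ν :=
  le_of_tendsto' (hg.tendsto.comp hx) fun i => le_of_minimizes_add_mul (hmin i).1 (hmin i).2 hν

end PenalizedMinimizers

theorem limit_of_regularized_minimizers_general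
    {S : Type*} [MetricSpace S] [CompactSpace S] [Nonempty S]
    (f g : S → ℝ) (hf : Continuous f) (hg : Continuous g) :
    let Lset : Set S := {μ | ∃ (γs : ℕ → ℝ) (μs : ℕ → S),
      (∀ i, 0 < γs i ∧ ∀ y, f (μs i) + γs i * g (μs i) ≤ f y + γs i * g y) ∧
      Tendsto γs atTop (nhds 0) ∧ Tendsto μs atTop (nhds μ)}
    Lset.Nonempty ∧
    Lset ⊆ {x | ∀ y, f x ≤ f y} ∧
    (∀ μ ∈ Lset, ∀ ν, (∀ y, f ν ≤ f y) → g μ ≤ g ν) := by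
  intro Lset
  obtain ⟨γs, μs, μ, hμ⟩ := exists_tendsto_minimizers_add_mul hf hg
  refine ⟨⟨μ, γs, μs, hμ⟩, ?_, ?_⟩
  · rintro μ ⟨γs, μs, hmin, hγ, hμ⟩
    exact minimizes_of_tendsto_minimizers_add_mul hf.continuousAt hg.continuousAt
      (fun i => (hmin i).2) hγ hμ
  · rintro μ ⟨γs, μs, hmin, -, hμ⟩ ν hν
    exact le_of_tendsto_minimizers_add_mul hg.continuousAt hmin hμ hν

/-- Abstract Γ-convergence fact: on a nonempty compact metric space, with `f, g`
continuous and `f ≥ 0`, the set of limits of minimizers of `f + γg` as `γ → 0⁺` is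
nonempty, consists of minimizers of `f`, and `g` is minimal (over the minimizers of
`f`) — hence constant — on this limit set. -/
theorem limit_of_regularized_minimizers
    {S : Type*} [MetricSpace S] [CompactSpace S] [Nonempty S]
    (f g : S → ℝ) (hf : Continuous f) (hg : Continuous g) (hf0 : ∀ x, 0 ≤ f x) :
    let Lset : Set S := {μ | ∃ (γs : ℕ → ℝ) (μs : ℕ → S),
      (∀ i, 0 < γs i ∧ ∀ y, f (μs i) + γs i * g (μs i) ≤ f y + γs i * g y) ∧
      Tendsto γs atTop (nhds 0) ∧ Tendsto μs atTop (nhds μ)}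
    Lset.Nonempty ∧
    Lset ⊆ {x | ∀ y, f x ≤ f y} ∧
    (∀ μ ∈ Lset, ∀ ν, (∀ y, f ν ≤ f y) → g μ ≤ g ν) :=
  limit_of_regularized_minimizers_general f g hf hg
end
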